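/- arXiv:1801.01346 — 3 statements merged into one kernel-verified Lean document; each statement's English description precedes it below -/
import Mathlib

section
/- Let t > 0. Then for all r ≥ 0, g_t(r) := ∑_{n=1}^∞ n^{-1} sin²(n^{-t} r) ≤ ln(1 + r^{1/t}) + C_t, where C_t = ζ(1+2t) + sup_{n∈ℕ} (∑_{k=1}^n k^{-1} − ln n). -/
open Real Filter

private lemma telescope_hasSum (h : ℕ → ℝ) (hmono : ∀ k, h (k+1) ≤ h k)
    (hlim : Tendsto h atTop (nhds 0)) :
    HasSum (fun k => h k - h (k+1)) (h 0) := by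
  rw [hasSum_iff_tendsto_nat_of_nonneg (fun i => sub_nonneg.2 (hmono i))]
  have e : ∀ n : ℕ, ∑ i ∈ Finset.range n, (h i - h (i+1)) = h 0 - h n :=
    fun n => Finset.sum_range_sub' h n
  simp only [e]
  simpa using (tendsto_const_nhds (x := h 0) (f := atTop)).sub hlim

private lemma slope_eq (p a : ℝ) (hp : 0 < p) (ha : 1 ≤ a) :
    ∃ c ∈ Set.Ioo a (a+1), a ^ (-p) - (a+1) ^ (-p) = p * c ^ (-p-1) := by
  have ha0 : (0:ℝ) < a := lt_of_lt_of_le one_pos ha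
  have hcont : ContinuousOn (fun x : ℝ => x ^ (-p)) (Set.Icc a (a+1)) := by
    intro x hx
    exact (Real.continuousAt_rpow_const x (-p)
      (Or.inl (ne_of_gt (lt_of_lt_of_le ha0 hx.1)))).continuousWithinAt
  have hderiv : ∀ x ∈ Set.Ioo a (a+1),
      HasDerivAt (fun x : ℝ => x ^ (-p)) (-p * x ^ (-p-1)) x := by
    intro x hx
    have := Real.hasDerivAt_rpow_const (x := x) (p := -p)
      (Or.inl (ne_of_gt (lt_trans ha0 hx.1)))
    simpa [sub_eq_add_neg, neg_add] using this
  obtain ⟨c, hc, hceq⟩ := exists_hasDerivAt_eq_slope (fun x : ℝ => x ^ (-p))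
    (fun x => -p * x ^ (-p-1)) (by linarith) hcont hderiv
  refine ⟨c, hc, ?_⟩
  have h1 : (a+1) - a = 1 := by ring
  rw [h1, div_one] at hceq
  linarith

private lemma diff_ge (p a : ℝ) (hp : 0 < p) (ha : 1 ≤ a) :
    p * (a+1) ^ (-p-1) ≤ a ^ (-p) - (a+1) ^ (-p) := by
  obtain ⟨c, hc, hceq⟩ := slope_eq p a hp ha
  have ha0 : (0:ℝ) < a := lt_of_lt_of_le one_pos ha
  have : (a+1) ^ (-p-1) ≤ c ^ (-p-1) :=
    Real.rpow_le_rpow_of_nonpos (lt_trans ha0 hc.1) hc.2.le (by linarith)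
  nlinarith

private lemma diff_le (p a : ℝ) (hp : 0 < p) (ha : 1 ≤ a) :
    a ^ (-p) - (a+1) ^ (-p) ≤ p * a ^ (-p-1) := by
  obtain ⟨c, hc, hceq⟩ := slope_eq p a hp ha
  have ha0 : (0:ℝ) < a := lt_of_lt_of_le one_pos ha
  have : c ^ (-p-1) ≤ a ^ (-p-1) :=
    Real.rpow_le_rpow_of_nonpos ha0 hc.1.le (by linarith)
  nlinarith

private lemma tele_summable (p : ℝ) (hp : 0 < p) (N : ℕ) (hN : 1 ≤ N) :
    HasSum (fun k : ℕ => ((N:ℝ)+k) ^ (-p) / p - ((N:ℝ)+(k+1)) ^ (-p) / p)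
      ((N:ℝ) ^ (-p) / p) := by
  have hN0 : (0:ℝ) < N := by exact_mod_cast hN
  have h0 : ∀ k : ℕ, (0:ℝ) < (N:ℝ) + k := fun k => by positivity
  have hmono : ∀ k : ℕ, ((N:ℝ)+(k+1)) ^ (-p) / p ≤ ((N:ℝ)+k) ^ (-p) / p := by
    intro k
    have := Real.rpow_le_rpow_of_nonpos (h0 k) (by push_cast; linarith : (N:ℝ)+k ≤ (N:ℝ)+(k+1))
      (by linarith : -p ≤ 0)
    gcongr
  have hlim : Tendsto (fun k : ℕ => ((N:ℝ)+k) ^ (-p) / p) atTop (nhds 0) := by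
    have h1 : Tendsto (fun k : ℕ => (N:ℝ)+k) atTop atTop :=
      tendsto_atTop_add_const_left _ _ tendsto_natCast_atTop_atTop
    have h2 := (tendsto_rpow_neg_atTop hp).comp h1
    simpa using h2.div_const p
  have := telescope_hasSum (fun k : ℕ => ((N:ℝ)+k) ^ (-p) / p)
    (fun k => by exact_mod_cast hmono k) hlim
  simpa using this

private lemma tail_bound (p : ℝ) (hp : 0 < p) (N : ℕ) (hN : 1 ≤ N) :
    Summable (fun k : ℕ => ((N:ℝ)+k+1) ^ (-p-1)) ∧
    ∑' k : ℕ, ((N:ℝ)+k+1) ^ (-p-1) ≤ (N:ℝ) ^ (-p) / p := by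
  have hN0 : (0:ℝ) < N := by exact_mod_cast hN
  have hle : ∀ k : ℕ, ((N:ℝ)+k+1) ^ (-p-1)
      ≤ ((N:ℝ)+k) ^ (-p) / p - ((N:ℝ)+(k+1)) ^ (-p) / p := by
    intro k
    have hN1 : (1:ℝ) ≤ (N:ℝ) := by exact_mod_cast hN
    have ha : (1:ℝ) ≤ (N:ℝ)+k := by
      have : (0:ℝ) ≤ (k:ℝ) := Nat.cast_nonneg k
      linarith
    have := diff_ge p ((N:ℝ)+k) hp ha
    have h2 : ((N:ℝ)+k+1) ^ (-p-1) ≤ (((N:ℝ)+k) ^ (-p) - ((N:ℝ)+k+1) ^ (-p)) / p := by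
      rw [le_div_iff₀ hp]
      linarith
    calc ((N:ℝ)+k+1) ^ (-p-1) ≤ (((N:ℝ)+k) ^ (-p) - ((N:ℝ)+k+1) ^ (-p)) / p := h2
      _ = ((N:ℝ)+k) ^ (-p) / p - ((N:ℝ)+(k+1)) ^ (-p) / p := by push_cast; ring_nf
  have hts := tele_summable p hp N hN
  have hsum : Summable (fun k : ℕ => ((N:ℝ)+k+1) ^ (-p-1)) :=
    Summable.of_nonneg_of_le (fun k => Real.rpow_nonneg (by positivity) _) hle hts.summable
  refine ⟨hsum, ?_⟩
  calc ∑' k : ℕ, ((N:ℝ)+k+1) ^ (-p-1)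
      ≤ ∑' k : ℕ, (((N:ℝ)+k) ^ (-p) / p - ((N:ℝ)+(k+1)) ^ (-p) / p) :=
        Summable.tsum_le_tsum hle hsum hts.summable
    _ = (N:ℝ) ^ (-p) / p := hts.tsum_eq

private lemma zeta_lower (p : ℝ) (hp : 0 < p)
    (hsum : Summable (fun k : ℕ => ((k:ℝ)+1) ^ (-p-1))) :
    1/p ≤ ∑' k : ℕ, ((k:ℝ)+1) ^ (-p-1) := by
  have hts := tele_summable p hp 1 le_rfl
  simp only [Nat.cast_one] at hts
  have hle : ∀ k : ℕ, ((1:ℝ)+k) ^ (-p) / p - ((1:ℝ)+(k+1)) ^ (-p) / p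
      ≤ ((k:ℝ)+1) ^ (-p-1) := by
    intro k
    have ha : (1:ℝ) ≤ (1:ℝ)+k := by
      have : (0:ℝ) ≤ (k:ℝ) := Nat.cast_nonneg k
      linarith
    have := diff_le p ((1:ℝ)+k) hp ha
    have h2 : (((1:ℝ)+k) ^ (-p) - ((1:ℝ)+k+1) ^ (-p)) / p ≤ ((1:ℝ)+k) ^ (-p-1) := by
      rw [div_le_iff₀ hp]
      linarith
    calc ((1:ℝ)+k) ^ (-p) / p - ((1:ℝ)+(k+1)) ^ (-p) / p
        = (((1:ℝ)+k) ^ (-p) - ((1:ℝ)+k+1) ^ (-p)) / p := by push_cast; ring_nf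
      _ ≤ ((1:ℝ)+k) ^ (-p-1) := h2
      _ = ((k:ℝ)+1) ^ (-p-1) := by rw [add_comm]
  have h1 : (1:ℝ) ^ (-p) / p = 1/p := by rw [Real.one_rpow]
  calc 1/p = ∑' k : ℕ, (((1:ℝ)+k) ^ (-p) / p - ((1:ℝ)+(k+1)) ^ (-p) / p) := by
        rw [hts.tsum_eq, Real.one_rpow]
    _ ≤ ∑' k : ℕ, ((k:ℝ)+1) ^ (-p-1) := Summable.tsum_le_tsum hle hts.summable hsum

/-- For `t > 0` and `r ≥ 0`,
`g_t(r) = ∑_{n=1}^∞ n^{-1} sin²(r/n^t) ≤ ln(1 + r^{1/t}) + C_t` with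
`C_t = ζ(1+2t) + sup_n (H_n - ln n)`. -/
theorem stmt2 (t r : ℝ) (ht : 0 < t) (hr : 0 ≤ r) :
    (∑' n : ℕ+, (n : ℝ)⁻¹ * Real.sin (r / (n : ℝ) ^ t) ^ 2)
      ≤ Real.log (1 + r ^ (1 / t)) +
        ((∑' n : ℕ+, (n : ℝ) ^ (-(1 + 2 * t))) +
          ⨆ n : ℕ+, ((∑ k ∈ Finset.Icc 1 (n : ℕ), (k : ℝ)⁻¹) - Real.log (n : ℝ))) := by
  have ht2 : (0:ℝ) < 2 * t := by linarith
  set p : ℝ := 2 * t with hpdef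
  have hexp : -(1 + 2 * t) = -p - 1 := by rw [hpdef]; ring
  set M : ℝ := r ^ (1 / t) with hMdef
  have hM0 : 0 ≤ M := Real.rpow_nonneg hr _
  set N : ℕ := max ⌈M⌉₊ 1 with hNdef
  have hN1 : 1 ≤ N := le_max_right _ _
  have hN0 : (0:ℝ) < (N:ℝ) := by exact_mod_cast hN1
  have hMN : M ≤ (N:ℝ) := (Nat.le_ceil M).trans (by exact_mod_cast le_max_left _ _)
  have hNM1 : (N:ℝ) ≤ M + 1 := by
    rw [hNdef]
    push_cast
    exact max_le (Nat.ceil_lt_add_one hM0).le (by linarith)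
  have hrM : M ^ t = r := by rw [hMdef, one_div]; exact Real.rpow_inv_rpow hr (ne_of_gt ht)
  have hrN : r ≤ (N:ℝ) ^ t := hrM ▸ Real.rpow_le_rpow hM0 hMN ht.le
  have hr2 : r ^ 2 ≤ (N:ℝ) ^ p := by
    have h1 : r ^ 2 ≤ ((N:ℝ) ^ t) ^ 2 := pow_le_pow_left₀ hr hrN 2
    have h2 : ((N:ℝ) ^ t) ^ 2 = (N:ℝ) ^ p := by
      rw [sq, ← Real.rpow_add hN0, hpdef]; ring_nf
    linarith
  -- the sequence over ℕ
  set F : ℕ → ℝ := fun k => ((k:ℝ)+1)⁻¹ * Real.sin (r / ((k:ℝ)+1) ^ t) ^ 2 with hFdef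
  have hF0 : ∀ k, 0 ≤ F k := by
    intro k
    have : (0:ℝ) ≤ ((k:ℝ)+1)⁻¹ := by positivity
    exact mul_nonneg this (sq_nonneg _)
  have hLHS : (∑' n : ℕ+, (n : ℝ)⁻¹ * Real.sin (r / (n : ℝ) ^ t) ^ 2) = ∑' k : ℕ, F k := by
    rw [← Equiv.pnatEquivNat.symm.tsum_eq
      (fun n : ℕ+ => (n : ℝ)⁻¹ * Real.sin (r / (n : ℝ) ^ t) ^ 2)]
    refine tsum_congr fun k => ?_
    have : ((Equiv.pnatEquivNat.symm k : ℕ+) : ℝ) = (k:ℝ) + 1 := by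
      simp [Equiv.pnatEquivNat, Nat.succPNat]
    rw [hFdef]; simp only [this]
  have hZ : (∑' n : ℕ+, (n : ℝ) ^ (-(1 + 2 * t))) = ∑' k : ℕ, ((k:ℝ)+1) ^ (-p-1) := by
    rw [← Equiv.pnatEquivNat.symm.tsum_eq (fun n : ℕ+ => (n : ℝ) ^ (-(1 + 2 * t)))]
    refine tsum_congr fun k => ?_
    have : ((Equiv.pnatEquivNat.symm k : ℕ+) : ℝ) = (k:ℝ) + 1 := by
      simp [Equiv.pnatEquivNat, Nat.succPNat]
    rw [this, hexp]
  -- pointwise bound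
  have hFle : ∀ k : ℕ, F k ≤ r ^ 2 * ((k:ℝ)+1) ^ (-p-1) := by
    intro k
    have hk0 : (0:ℝ) < (k:ℝ)+1 := by positivity
    have hsin : Real.sin (r / ((k:ℝ)+1) ^ t) ^ 2 ≤ (r / ((k:ℝ)+1) ^ t) ^ 2 :=
      Real.sin_sq_le_sq
    have h1 : F k ≤ ((k:ℝ)+1)⁻¹ * (r / ((k:ℝ)+1) ^ t) ^ 2 := by
      rw [hFdef]
      exact mul_le_mul_of_nonneg_left hsin (by positivity)
    have h2 : ((k:ℝ)+1)⁻¹ * (r / ((k:ℝ)+1) ^ t) ^ 2 = r ^ 2 * ((k:ℝ)+1) ^ (-p-1) := by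
      have e1 : (((k:ℝ)+1) ^ t) ^ 2 = ((k:ℝ)+1) ^ p := by
        rw [sq, ← Real.rpow_add hk0, hpdef]; ring_nf
      have e2 : ((k:ℝ)+1) ^ (-p-1) = (((k:ℝ)+1) ^ p * ((k:ℝ)+1))⁻¹ := by
        rw [show -p-1 = -(p+1) by ring, Real.rpow_neg hk0.le, Real.rpow_add hk0,
          Real.rpow_one]
      rw [div_pow, e1, e2, mul_inv]
      ring
    linarith
  have hGsum : Summable (fun k : ℕ => ((k:ℝ)+1) ^ (-p-1)) := by
    have h0 : Summable (fun n : ℕ => (n:ℝ) ^ (-p-1)) :=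
      Real.summable_nat_rpow.2 (by linarith)
    have := (summable_nat_add_iff 1).2 h0
    refine this.congr fun k => ?_
    push_cast
    ring_nf
  have hFsum : Summable F :=
    Summable.of_nonneg_of_le hF0 hFle (hGsum.mul_left _)
  -- split
  have hsplit : ∑ i ∈ Finset.range N, F i + ∑' i : ℕ, F (i + N) = ∑' i : ℕ, F i :=
    Summable.sum_add_tsum_nat_add N hFsum
  -- the sup and its boundedness
  set c : ℝ := ⨆ n : ℕ+, ((∑ k ∈ Finset.Icc 1 (n : ℕ), (k : ℝ)⁻¹) - Real.log (n : ℝ))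
    with hcdef
  have hharm : ∀ n : ℕ, (harmonic n : ℝ) = ∑ k ∈ Finset.Icc 1 n, (k : ℝ)⁻¹ := by
    intro n
    rw [harmonic_eq_sum_Icc]
    push_cast
    rfl
  have hbdd : BddAbove (Set.range fun n : ℕ+ =>
      (∑ k ∈ Finset.Icc 1 (n : ℕ), (k : ℝ)⁻¹) - Real.log (n : ℝ)) := by
    refine ⟨1, ?_⟩
    rintro x ⟨n, rfl⟩
    have := harmonic_le_one_add_log (n : ℕ)
    rw [hharm] at this
    simp only
    linarith
  have hc : (∑ k ∈ Finset.Icc 1 N, (k : ℝ)⁻¹) - Real.log N ≤ c := by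
    have := le_ciSup hbdd (⟨N, hN1⟩ : ℕ+)
    simpa using this
  -- head estimate
  have hhead : ∑ i ∈ Finset.range N, F i ≤ Real.log (1 + M) + c := by
    have h1 : ∑ i ∈ Finset.range N, F i ≤ ∑ i ∈ Finset.range N, ((i:ℝ)+1)⁻¹ := by
      refine Finset.sum_le_sum fun i _ => ?_
      rw [hFdef]
      exact mul_le_of_le_one_right (by positivity) (Real.sin_sq_le_one _)
    have h2 : ∑ i ∈ Finset.range N, ((i:ℝ)+1)⁻¹ = ∑ k ∈ Finset.Icc 1 N, (k : ℝ)⁻¹ := by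
      rw [← hharm]
      unfold harmonic
      push_cast
      rfl
    have h3 : Real.log N ≤ Real.log (1 + M) := by
      apply Real.log_le_log hN0
      linarith
    calc ∑ i ∈ Finset.range N, F i ≤ ∑ k ∈ Finset.Icc 1 N, (k : ℝ)⁻¹ := by
          rw [← h2]; exact h1
      _ ≤ Real.log N + c := by linarith
      _ ≤ Real.log (1 + M) + c := by linarith
  -- tail estimate
  obtain ⟨htsum, htle⟩ := tail_bound p ht2 N hN1
  have htail : ∑' i : ℕ, F (i + N) ≤ 1 / p := by
    have hle2 : ∀ i : ℕ, F (i + N) ≤ r ^ 2 * ((N:ℝ)+i+1) ^ (-p-1) := by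
      intro i
      have := hFle (i + N)
      have e : ((i + N : ℕ):ℝ) + 1 = (N:ℝ)+i+1 := by push_cast; ring
      rwa [e] at this
    have hsum2 : Summable (fun i : ℕ => F (i + N)) := (summable_nat_add_iff N).2 hFsum
    calc ∑' i : ℕ, F (i + N) ≤ ∑' i : ℕ, r ^ 2 * ((N:ℝ)+i+1) ^ (-p-1) :=
          Summable.tsum_le_tsum hle2 hsum2 (htsum.mul_left _)
      _ = r ^ 2 * ∑' i : ℕ, ((N:ℝ)+i+1) ^ (-p-1) := tsum_mul_left
      _ ≤ (N:ℝ) ^ p * ((N:ℝ) ^ (-p) / p) := by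
          apply mul_le_mul hr2 htle (tsum_nonneg fun i => Real.rpow_nonneg (by positivity) _)
            (le_trans (sq_nonneg r) hr2)
      _ = 1 / p := by
          rw [mul_div_assoc'] -- (a * b) / c
          rw [← Real.rpow_add hN0]
          simp
  -- zeta lower bound
  have hzl : 1 / p ≤ ∑' k : ℕ, ((k:ℝ)+1) ^ (-p-1) := zeta_lower p ht2 hGsum
  -- put everything together
  rw [hLHS, ← hsplit, hZ]
  have : (1:ℝ) + M = 1 + r ^ (1/t) := by rw [hMdef]
  linarith
end

section
/- Let u ∈ L²(ℝ²) and suppose u = f e^{−φ} where f is entire (as a function of z = x₁+ix₂) and φ : ℝ² → ℝ is continuous with ∫_{B_R(0)} e^{2φ} dx = O(R^{4/t + 2}) as R → ∞ for some t > 0. Then f is a polynomial of degree at most ⌈2/t⌉. -/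
/-!
The Taylor coefficients `aₙ` of `f` at `0` satisfy the Cauchy estimate `‖aₙ‖ rⁿ ≤` (average of
`‖f‖` over the circle of radius `r`); integrating in polar coordinates gives
`2π ‖aₙ‖ R^(n+2) / (n+2) ≤ ∫_{B_R} ‖f‖`. On the other hand `‖f‖ = ‖u‖ e^φ`, so the inequality
`2ab ≤ λ a² + λ⁻¹ b²` with `λ = R^(2/t+1)` gives `∫_{B_R} ‖f‖ ≤ (‖u‖₂² + c) R^(2/t+1) / 2`.
Hence `aₙ = 0` as soon as `n + 2 > 2/t + 1`.
-/

open Complex MeasureTheory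
open Real Set Filter Metric Topology
open scoped NNReal

theorem Complex.polarCoord_symm_eq_circleMap (p : ℝ × ℝ) :
    Complex.polarCoord.symm p = circleMap 0 p.1 p.2 := by
  simp [circleMap, Complex.polarCoord_symm_apply, Complex.exp_mul_I]

section

variable {E : Type*} [NormedAddCommGroup E] [NormedSpace ℝ E]

theorem integral_Ioo_circleMap_eq_circleAverage (g : ℂ → E) (c : ℂ) (r : ℝ) :
    ∫ θ in Ioo (-π) π, g (circleMap c r θ) = (2 * π) • circleAverage g c r := by
  rw [circleAverage_eq_integral_add (-π), smul_inv_smul₀ (by positivity),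
    intervalIntegral.integral_comp_add_right (fun θ ↦ g (circleMap c r θ)),
    intervalIntegral.integral_of_le (by linarith [pi_pos]), integral_Ioc_eq_integral_Ioo]
  ring_nf

theorem setIntegral_ball_eq_integral_mul_circleAverage [CompleteSpace E] {g : ℂ → E}
    (hg : Continuous g) {R : ℝ} (hR : 0 ≤ R) :
    ∫ z in ball (0 : ℂ) R, g z = (2 * π) • ∫ r in 0..R, r • circleAverage g 0 r := by
  have hbox : polarCoord.target ∩ {p | |p.1| < R} = Ioo 0 R ×ˢ Ioo (-π) π := by
    ext ⟨r, θ⟩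
    simp only [polarCoord_target, mem_inter_iff, mem_prod, mem_Ioi, mem_Ioo, mem_ofPred_eq]
    constructor
    · rintro ⟨⟨hr, hθ⟩, hrR⟩
      exact ⟨⟨hr, (le_abs_self r).trans_lt hrR⟩, hθ⟩
    · rintro ⟨⟨hr, hrR⟩, hθ⟩
      exact ⟨⟨hr, hθ⟩, by rwa [abs_of_pos hr]⟩
  have hint : IntegrableOn (fun p : ℝ × ℝ ↦ p.1 • g (circleMap 0 p.1 p.2))
      (Ioo 0 R ×ˢ Ioo (-π) π) :=
    (ContinuousOn.integrableOn_compact (isCompact_Icc.prod isCompact_Icc) (by fun_prop)).mono_set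
      (prod_mono Ioo_subset_Icc_self Ioo_subset_Icc_self)
  calc ∫ z in ball (0 : ℂ) R, g z
      = ∫ p in polarCoord.target, p.1 • (ball 0 R).indicator g (Complex.polarCoord.symm p) := by
        rw [Complex.integral_comp_polarCoord_symm, integral_indicator measurableSet_ball]
    _ = ∫ p in Ioo 0 R ×ˢ Ioo (-π) π, p.1 • g (circleMap 0 p.1 p.2) := by
        rw [← hbox, ← setIntegral_indicator
          (measurableSet_lt measurable_fst.abs measurable_const)]
        congr 1 with p
        rw [Complex.polarCoord_symm_eq_circleMap]
        by_cases hp : |p.1| < R <;> simp [indicator, hp]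
    _ = ∫ r in Ioo 0 R, ∫ θ in Ioo (-π) π, r • g (circleMap 0 r θ) := by
        rw [Measure.volume_eq_prod, setIntegral_prod _ hint]
    _ = (2 * π) • ∫ r in 0..R, r • circleAverage g 0 r := by
        simp_rw [integral_smul, integral_Ioo_circleMap_eq_circleAverage, smul_comm _ (2 * π)]
        rw [integral_smul, intervalIntegral.integral_of_le hR, integral_Ioc_eq_integral_Ioo]

end

theorem nonpos_of_forall_mul_rpow_le {a C s m R₀ : ℝ} (hsm : s < m)
    (h : ∀ R, R₀ ≤ R → a * R ^ m ≤ C * R ^ s) : a ≤ 0 := by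
  have hlim : Tendsto (fun R ↦ C * R ^ (s - m)) atTop (𝓝 0) := by
    simpa [neg_sub] using (tendsto_rpow_neg_atTop (sub_pos.2 hsm)).const_mul C
  refine ge_of_tendsto hlim ?_
  filter_upwards [eventually_ge_atTop R₀, eventually_gt_atTop 0] with R hR hR₀
  rw [rpow_sub hR₀, mul_div_assoc', le_div_iff₀ (rpow_pos_of_pos hR₀ m)]
  exact h R hR

section

variable {E : Type*} [NormedAddCommGroup E] [NormedSpace ℂ E] [CompleteSpace E]

theorem Differentiable.norm_coeff_mul_pow_le_circleAverage {f : ℂ → E}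
    {p : FormalMultilinearSeries ℂ ℂ E} {c : ℂ} (hf : Differentiable ℂ f)
    (hp : HasFPowerSeriesAt f p c) (n : ℕ) {r : ℝ} (hr : 0 < r) :
    ‖p.coeff n‖ * r ^ n ≤ circleAverage (‖f ·‖) c r := by
  lift r to ℝ≥0 using hr.le
  have hcauchy : p = cauchyPowerSeries f c r :=
    hp.eq_formalMultilinearSeries (hf.hasFPowerSeriesOnBall c hr).hasFPowerSeriesAt
  have h := norm_cauchyPowerSeries_le f c r n
  rwa [← hcauchy, FormalMultilinearSeries.norm_apply_eq_norm_coef, NNReal.abs_eq, inv_pow,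
    ← div_eq_mul_inv, le_div_iff₀ (by positivity)] at h

theorem Differentiable.norm_coeff_mul_pow_le_integral_ball {f : ℂ → E}
    {p : FormalMultilinearSeries ℂ ℂ E} (hf : Differentiable ℂ f)
    (hp : HasFPowerSeriesAt f p 0) (n : ℕ) {R : ℝ} (hR : 0 ≤ R) :
    2 * π * ‖p.coeff n‖ * (R ^ (n + 2) / (n + 2)) ≤ ∫ z in ball (0 : ℂ) R, ‖f z‖ := by
  have hfc : Continuous (‖f ·‖) := hf.continuous.norm
  calc 2 * π * ‖p.coeff n‖ * (R ^ (n + 2) / (n + 2))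
      = 2 * π * ∫ r in 0..R, r * (‖p.coeff n‖ * r ^ n) := by
        simp_rw [mul_left_comm _ (‖p.coeff n‖), ← pow_succ']
        rw [intervalIntegral.integral_const_mul, integral_pow]
        push_cast
        ring
    _ ≤ 2 * π * ∫ r in 0..R, r * circleAverage (‖f ·‖) 0 r := by
        gcongr
        refine intervalIntegral.integral_mono_on hR
          (Continuous.intervalIntegrable (by fun_prop) _ _)
          (Continuous.intervalIntegrable (by fun_prop) _ _) fun r hr ↦ ?_
        rcases hr.1.eq_or_lt with rfl | hr₀
        · simp
        · exact mul_le_mul_of_nonneg_left (hf.norm_coeff_mul_pow_le_circleAverage hp n hr₀) hr.1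
    _ = ∫ z in ball (0 : ℂ) R, ‖f z‖ := by
        rw [setIntegral_ball_eq_integral_mul_circleAverage hfc hR, smul_eq_mul]
        rfl

theorem Differentiable.coeff_eq_zero_of_integral_ball_le {f : ℂ → E}
    {p : FormalMultilinearSeries ℂ ℂ E} (hf : Differentiable ℂ f) (hp : HasFPowerSeriesAt f p 0)
    {C s R₀ : ℝ} (hgrowth : ∀ R, R₀ ≤ R → ∫ z in ball (0 : ℂ) R, ‖f z‖ ≤ C * R ^ s) {n : ℕ}
    (hn : s < n + 2) : p.coeff n = 0 := by
  have hle : 2 * π / (n + 2) * ‖p.coeff n‖ ≤ 0 := by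
    refine nonpos_of_forall_mul_rpow_le (C := C) (R₀ := max R₀ 0) hn fun R hR ↦ ?_
    have hR₀ : 0 ≤ R := le_of_max_le_right hR
    calc 2 * π / (n + 2) * ‖p.coeff n‖ * R ^ ((n : ℝ) + 2)
        = 2 * π * ‖p.coeff n‖ * (R ^ (n + 2) / (n + 2)) := by
          rw [show ((n : ℝ) + 2) = ((n + 2 : ℕ) : ℝ) by push_cast; ring, rpow_natCast]
          push_cast
          ring
      _ ≤ ∫ z in ball (0 : ℂ) R, ‖f z‖ := hf.norm_coeff_mul_pow_le_integral_ball hp n hR₀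
      _ ≤ C * R ^ s := hgrowth R (le_of_max_le_left hR)
  exact norm_eq_zero.1 ((nonpos_of_mul_nonpos_right hle (by positivity)).antisymm (norm_nonneg _))

end

theorem HasFPowerSeriesOnBall.exists_polynomial_of_coeff_eq_zero {f : ℂ → ℂ}
    {p : FormalMultilinearSeries ℂ ℂ ℂ} (hp : HasFPowerSeriesOnBall f p 0 ⊤) {d : ℕ}
    (hd : ∀ n, d < n → p.coeff n = 0) :
    ∃ q : Polynomial ℂ, q.natDegree ≤ d ∧ ∀ z, f z = q.eval z := by
  refine ⟨∑ k ∈ Finset.range (d + 1), Polynomial.monomial k (p.coeff k), ?_, fun z ↦ ?_⟩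
  · exact Polynomial.natDegree_sum_le_of_forall_le _ _ fun k hk ↦
      (Polynomial.natDegree_monomial_le _).trans (Nat.lt_succ_iff.1 (Finset.mem_range.1 hk))
  have hsum := hp.hasSum (y := z) (by simp)
  simp_rw [zero_add, FormalMultilinearSeries.apply_eq_pow_smul_coeff, smul_eq_mul] at hsum
  have hfinite : HasSum (fun n ↦ z ^ n * p.coeff n)
      (∑ n ∈ Finset.range (d + 1), z ^ n * p.coeff n) :=
    hasSum_sum_of_ne_finset_zero fun n hn ↦ by
      rw [hd n (by simpa using hn), mul_zero]
  simp [hsum.unique hfinite, Polynomial.eval_finsetSum, mul_comm]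

theorem two_mul_integral_mul_le {α : Type*} [MeasurableSpace α] {μ : Measure α} {a b : α → ℝ}
    (ha : Integrable (fun x ↦ a x ^ 2) μ) (hb : Integrable (fun x ↦ b x ^ 2) μ)
    (hab : Integrable (fun x ↦ a x * b x) μ) {ε : ℝ} (hε : 0 < ε) :
    2 * ∫ x, a x * b x ∂μ ≤ ε * ∫ x, a x ^ 2 ∂μ + ε⁻¹ * ∫ x, b x ^ 2 ∂μ := by
  rw [← integral_const_mul, ← integral_const_mul, ← integral_const_mul,
    ← integral_add (ha.const_mul _) (hb.const_mul _)]
  refine integral_mono (hab.const_mul 2) ((ha.const_mul _).add (hb.const_mul _)) fun x ↦ ?_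
  have hnonneg : 0 ≤ ε⁻¹ * (ε * a x - b x) ^ 2 := by positivity
  have hexpand : ε⁻¹ * (ε * a x - b x) ^ 2 = ε * a x ^ 2 + ε⁻¹ * b x ^ 2 - 2 * (a x * b x) := by
    field_simp
    ring
  dsimp only
  linarith

theorem setIntegral_ball_le_setIntegral_ball_prod {g : ℂ → ℝ} (hg : Continuous g)
    (hg₀ : 0 ≤ g) (R : ℝ) :
    ∫ z in ball (0 : ℂ) R, g z ≤ ∫ x in ball (0 : ℝ × ℝ) R, g (x.1 + x.2 * I) := by
  have hsymm (x : ℝ × ℝ) : measurableEquivRealProd.symm x = x.1 + x.2 * I := by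
    rw [measurableEquivRealProd_symm_apply, mk_eq_add_mul_I]
  have hsub : (fun x : ℝ × ℝ ↦ x.1 + x.2 * I) ⁻¹' ball (0 : ℂ) R ⊆ ball (0 : ℝ × ℝ) R := by
    intro x hx
    rw [mem_preimage, ← hsymm, mem_ball_zero_iff, measurableEquivRealProd_symm_apply] at hx
    rw [mem_ball_zero_iff, Prod.norm_def, Real.norm_eq_abs, Real.norm_eq_abs]
    exact max_lt ((abs_re_le_norm _).trans_lt hx) ((abs_im_le_norm _).trans_lt hx)
  rw [← volume_preserving_equiv_real_prod.symm.setIntegral_preimage_emb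
    measurableEquivRealProd.symm.measurableEmbedding, funext hsymm]
  have hcont : Continuous fun x : ℝ × ℝ ↦ g (x.1 + x.2 * I) := by fun_prop
  refine setIntegral_mono_set ?_ (ae_of_all _ fun x ↦ hg₀ _) hsub.eventuallyLE
  exact (hcont.continuousOn.integrableOn_compact (isCompact_closedBall 0 R)).mono_set
    ball_subset_closedBall

theorem two_mul_integral_ball_norm_le {f : ℂ → ℂ} (hf : Continuous f) {φ : ℝ × ℝ → ℝ}
    (hφ : Continuous φ) {u : ℝ × ℝ → ℂ} (hu : ∀ x, u x = f (x.1 + x.2 * I) * Real.exp (-φ x))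
    (huL2 : MemLp u 2 volume) {c s R : ℝ} (hR : 0 < R)
    (hgrow : ∫ x in ball (0 : ℝ × ℝ) R, Real.exp (2 * φ x) ≤ c * R ^ (2 * s)) :
    2 * ∫ z in ball (0 : ℂ) R, ‖f z‖ ≤ ((∫ x, ‖u x‖ ^ 2) + c) * R ^ s := by
  set ε := R ^ s
  have hε : 0 < ε := rpow_pos_of_pos hR s
  have hnorm (x : ℝ × ℝ) : ‖f (x.1 + x.2 * I)‖ = ‖u x‖ * Real.exp (φ x) := by
    rw [hu, norm_mul, norm_real, Real.norm_eq_abs, abs_exp, mul_assoc, ← Real.exp_add,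
      neg_add_cancel, Real.exp_zero, mul_one]
  have hsq (x : ℝ × ℝ) : Real.exp (φ x) ^ 2 = Real.exp (2 * φ x) := by
    rw [← Real.exp_nat_mul]
    norm_num
  have hcont : Continuous fun x ↦ ‖u x‖ * Real.exp (φ x) := by
    simp_rw [← hnorm]
    fun_prop
  have hball {g : ℝ × ℝ → ℝ} (hg : Continuous g) : IntegrableOn g (ball 0 R) :=
    (hg.continuousOn.integrableOn_compact (isCompact_closedBall 0 R)).mono_set
      ball_subset_closedBall
  have hu2 : Integrable (fun x ↦ ‖u x‖ ^ 2) := huL2.integrable_norm_pow two_ne_zero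
  calc 2 * ∫ z in ball (0 : ℂ) R, ‖f z‖
      ≤ 2 * ∫ x in ball (0 : ℝ × ℝ) R, ‖u x‖ * Real.exp (φ x) := by
        simp_rw [← hnorm]
        gcongr
        exact setIntegral_ball_le_setIntegral_ball_prod hf.norm (fun _ ↦ norm_nonneg _) R
    _ ≤ ε * (∫ x in ball (0 : ℝ × ℝ) R, ‖u x‖ ^ 2)
          + ε⁻¹ * ∫ x in ball (0 : ℝ × ℝ) R, Real.exp (φ x) ^ 2 :=
        two_mul_integral_mul_le hu2.integrableOn (hball (by fun_prop)) (hball hcont) hε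
    _ ≤ ε * (∫ x, ‖u x‖ ^ 2) + ε⁻¹ * (c * ε ^ 2) := by
        simp_rw [hsq]
        rw [← rpow_two, ← rpow_mul hR.le, mul_comm s]
        exact add_le_add
          (mul_le_mul_of_nonneg_left (setIntegral_le_integral hu2 (ae_of_all _ fun x ↦ sq_nonneg _))
            hε.le)
          (mul_le_mul_of_nonneg_left hgrow (inv_nonneg.2 hε.le))
    _ = ((∫ x, ‖u x‖ ^ 2) + c) * ε := by
        field_simp

theorem stmt17_general (t : ℝ) (f : ℂ → ℂ) (hf : Differentiable ℂ f)
    (φ : ℝ × ℝ → ℝ) (hφ : Continuous φ)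
    (u : ℝ × ℝ → ℂ) (hu : ∀ x : ℝ × ℝ, u x = f (x.1 + x.2 * Complex.I) * Real.exp (-φ x))
    (huL2 : MemLp u 2 volume)
    (hgrow : ∃ c R₀ : ℝ, ∀ R : ℝ, R₀ ≤ R →
      (∫ x in Metric.ball (0 : ℝ × ℝ) R, Real.exp (2 * φ x)) ≤ c * R ^ (4 / t + 2)) :
    ∃ p : Polynomial ℂ, p.natDegree ≤ ⌈2 / t⌉₊ ∧ ∀ z : ℂ, f z = p.eval z := by
  obtain ⟨c, R₀, hgrow⟩ := hgrow
  have hp := hf.hasFPowerSeriesOnBall 0 one_pos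
  have hL1 (R : ℝ) (hR : max R₀ 1 ≤ R) :
      ∫ z in ball (0 : ℂ) R, ‖f z‖ ≤ ((∫ x, ‖u x‖ ^ 2) + c) / 2 * R ^ (2 / t + 1) := by
    have h := two_mul_integral_ball_norm_le (s := 2 / t + 1) hf.continuous hφ hu huL2
      (one_pos.trans_le (le_of_max_le_right hR))
      ((hgrow R (le_of_max_le_left hR)).trans_eq (by ring_nf))
    linarith
  refine hp.exists_polynomial_of_coeff_eq_zero fun n hn ↦
    hf.coeff_eq_zero_of_integral_ball_le hp.hasFPowerSeriesAt hL1 ?_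
  have hceil : 2 / t ≤ ⌈2 / t⌉₊ := Nat.le_ceil _
  have hn' : (⌈2 / t⌉₊ : ℝ) + 1 ≤ n := by exact_mod_cast hn
  linarith

/-- If `u = f e^{-φ} ∈ L²(ℝ²)` with `f` entire and
`∫_{B_R(0)} e^{2φ} = O(R^{4/t+2})` as `R → ∞`, then `f` is a polynomial of degree at most
`⌈2/t⌉`. -/
theorem stmt17 (t : ℝ) (ht : 0 < t) (f : ℂ → ℂ) (hf : Differentiable ℂ f)
    (φ : ℝ × ℝ → ℝ) (hφ : Continuous φ)
    (u : ℝ × ℝ → ℂ) (hu : ∀ x : ℝ × ℝ, u x = f (x.1 + x.2 * Complex.I) * Real.exp (-φ x))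
    (huL2 : MemLp u 2 volume)
    (hgrow : ∃ c R₀ : ℝ, ∀ R : ℝ, R₀ ≤ R →
      (∫ x in Metric.ball (0 : ℝ × ℝ) R, Real.exp (2 * φ x)) ≤ c * R ^ (4 / t + 2)) :
    ∃ p : Polynomial ℂ, p.natDegree ≤ ⌈2 / t⌉₊ ∧ ∀ z : ℂ, f z = p.eval z :=
  stmt17_general t f hf φ hφ u hu huL2 hgrow
end

section
/- Let t > 0 and r ≥ 0, and set ρ = ⌊1 + r^{1/t}⌋. Then ∑_{n=1}^∞ n^{-1} sin²(r n^{-t}) ≤ ∑_{q=1}^{ρ} q^{-1} + ρ ∑_{p=1}^∞ (pρ+1)^{-1} p^{-2t}, and the second sum is bounded by ζ(1+2t). -/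
open Real Finset

private lemma aux_split18 (f : ℕ → ℝ) (ρ : ℕ) (hρ : 0 < ρ) (hs : Summable f) :
    ∑' n : ℕ+, f (n : ℕ)
      = (∑ i ∈ Finset.range ρ, f (i + 1))
        + ∑' p : ℕ, ∑ i ∈ Finset.range ρ, f ((p + 1) * ρ + i + 1) := by
  haveI : NeZero ρ := ⟨hρ.ne'⟩
  have hsp : Summable fun n : ℕ+ => f (n : ℕ) :=
    hs.comp_injective PNat.coe_injective
  have hs2 : Summable fun x : ℕ × Fin ρ => f (x.1 * ρ + (x.2 : ℕ) + 1) := by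
    have h := (((Nat.divModEquiv ρ).symm.trans Equiv.pnatEquivNat.symm).summable_iff
        (f := fun n : ℕ+ => f (n : ℕ))).2 hsp
    exact h
  have hinj : ∀ c : ℕ, Function.Injective fun p : ℕ => p * ρ + c + 1 := by
    intro c a b hab
    simp only at hab
    have h1 : a * ρ + c = b * ρ + c := Nat.add_right_cancel hab
    exact Nat.eq_of_mul_eq_mul_right hρ (Nat.add_right_cancel h1)
  have hg : Summable fun p : ℕ => ∑ i ∈ Finset.range ρ, f (p * ρ + i + 1) := by
    apply summable_sum
    intro i _
    exact hs.comp_injective (hinj i)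
  calc ∑' n : ℕ+, f (n : ℕ)
      = ∑' x : ℕ × Fin ρ, f (x.1 * ρ + (x.2 : ℕ) + 1) := by
        rw [← Equiv.tsum_eq ((Nat.divModEquiv ρ).symm.trans Equiv.pnatEquivNat.symm)
            (fun n : ℕ+ => f (n : ℕ))]
        exact tsum_congr fun x => rfl
    _ = ∑' p : ℕ, ∑ i ∈ Finset.range ρ, f (p * ρ + i + 1) := by
        rw [Summable.tsum_prod hs2]
        exact tsum_congr fun p => by
          rw [tsum_fintype, Fin.sum_univ_eq_sum_range (fun i => f (p * ρ + i + 1)) ρ]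
    _ = _ := by
        rw [Summable.tsum_eq_zero_add hg]
        congr 1
        exact Finset.sum_congr rfl fun i _ => by norm_num

/-- For `t > 0`, `r ≥ 0` and `ρ = ⌊1 + r^{1/t}⌋`,
`∑_{n≥1} n^{-1} sin²(r n^{-t}) ≤ ∑_{q=1}^ρ q^{-1} + ρ ∑_{p≥1} (pρ+1)^{-1} p^{-2t}`,
and the second term is bounded by `ζ(1+2t)`. -/
theorem stmt18 (t r : ℝ) (ht : 0 < t) (hr : 0 ≤ r) :
    (∑' n : ℕ+, (n : ℝ)⁻¹ * Real.sin (r * (n : ℝ) ^ (-t)) ^ 2)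
        ≤ (∑ q ∈ Finset.Icc 1 ⌊1 + r ^ (1 / t)⌋₊, (q : ℝ)⁻¹)
          + (⌊1 + r ^ (1 / t)⌋₊ : ℝ) *
              ∑' p : ℕ+, ((p : ℝ) * (⌊1 + r ^ (1 / t)⌋₊ : ℝ) + 1)⁻¹ * (p : ℝ) ^ (-(2 * t)) ∧
    (⌊1 + r ^ (1 / t)⌋₊ : ℝ) *
        (∑' p : ℕ+, ((p : ℝ) * (⌊1 + r ^ (1 / t)⌋₊ : ℝ) + 1)⁻¹ * (p : ℝ) ^ (-(2 * t)))
      ≤ ∑' n : ℕ+, (n : ℝ) ^ (-(1 + 2 * t)) := by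
  have hx0 : 0 ≤ r ^ (1 / t) := Real.rpow_nonneg hr _
  set ρ : ℕ := ⌊1 + r ^ (1 / t)⌋₊ with hρdef
  have hρ1 : 1 ≤ ρ := Nat.le_floor (by push_cast; linarith)
  have hρR : (1 : ℝ) ≤ (ρ : ℝ) := by exact_mod_cast hρ1
  have hρpos : (0 : ℝ) < (ρ : ℝ) := by linarith
  have hrt : r ^ (1 / t) ≤ (ρ : ℝ) := by
    have h := Nat.sub_one_lt_floor (1 + r ^ (1 / t))
    rw [← hρdef] at h
    linarith
  have hrρ : r ≤ (ρ : ℝ) ^ t := by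
    calc r = (r ^ (1 / t)) ^ t := by
          rw [← Real.rpow_mul hr, one_div_mul_cancel ht.ne', Real.rpow_one]
      _ ≤ (ρ : ℝ) ^ t := Real.rpow_le_rpow hx0 hrt ht.le
  -- pointwise exponent manipulation
  have hpow : ∀ x : ℝ, 0 < x → x⁻¹ * (x ^ (-t)) ^ 2 = x ^ (-(1 + 2 * t)) := by
    intro x hx
    rw [pow_two, ← Real.rpow_add hx, ← Real.rpow_neg_one x, ← Real.rpow_add hx]
    congr 1; ring
  -- basic facts about the summand
  have hf0 : ∀ n : ℕ, 0 ≤ (n : ℝ)⁻¹ * Real.sin (r * (n : ℝ) ^ (-t)) ^ 2 :=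
    fun n => by positivity
  have hfle : ∀ n : ℕ, (n : ℝ)⁻¹ * Real.sin (r * (n : ℝ) ^ (-t)) ^ 2 ≤ (n : ℝ)⁻¹ :=
    fun n => mul_le_of_le_one_right (by positivity) (Real.sin_sq_le_one _)
  -- zeta-type summability
  have hζnat : Summable (fun n : ℕ => (n : ℝ) ^ (-(1 + 2 * t))) :=
    Real.summable_nat_rpow.mpr (by linarith)
  have hζ : Summable (fun n : ℕ+ => ((n : ℕ) : ℝ) ^ (-(1 + 2 * t))) :=
    hζnat.comp_injective PNat.coe_injective
  -- summability of the main series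
  have hfs_nat : Summable (fun n : ℕ => (n : ℝ)⁻¹ * Real.sin (r * (n : ℝ) ^ (-t)) ^ 2) := by
    apply Summable.of_nonneg_of_le hf0 (fun n => ?_) (hζnat.mul_left (r ^ 2))
    rcases Nat.eq_zero_or_pos n with h | h
    · subst h
      simp only [Nat.cast_zero, inv_zero, zero_mul]
      positivity
    · have hp : (0 : ℝ) < (n : ℝ) := by exact_mod_cast h
      calc (n : ℝ)⁻¹ * Real.sin (r * (n : ℝ) ^ (-t)) ^ 2
          ≤ (n : ℝ)⁻¹ * (r * (n : ℝ) ^ (-t)) ^ 2 :=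
            mul_le_mul_of_nonneg_left Real.sin_sq_le_sq (by positivity)
        _ = r ^ 2 * ((n : ℝ)⁻¹ * ((n : ℝ) ^ (-t)) ^ 2) := by ring
        _ = r ^ 2 * (n : ℝ) ^ (-(1 + 2 * t)) := by rw [hpow _ hp]
  -- key estimate for n = p ρ + q
  have key : ∀ p q : ℕ, 1 ≤ p → 1 ≤ q → q ≤ ρ →
      ((p * ρ + q : ℕ) : ℝ)⁻¹ * Real.sin (r * ((p * ρ + q : ℕ) : ℝ) ^ (-t)) ^ 2
        ≤ (((p : ℕ) : ℝ) * (ρ : ℝ) + 1)⁻¹ * ((p : ℕ) : ℝ) ^ (-(2 * t)) := by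
    intro p q hp hq hqρ
    have hpR : (1 : ℝ) ≤ (p : ℝ) := by exact_mod_cast hp
    have hpPos : (0 : ℝ) < (p : ℝ) := by linarith
    have hq1 : (1 : ℝ) ≤ (q : ℝ) := by exact_mod_cast hq
    have hn : ((p * ρ + q : ℕ) : ℝ) = (p : ℝ) * (ρ : ℝ) + (q : ℝ) := by push_cast; ring
    have hpρpos : (0 : ℝ) < (p : ℝ) * (ρ : ℝ) := by positivity
    have hnpos : (0 : ℝ) < (p : ℝ) * (ρ : ℝ) + (q : ℝ) := by linarith
    have h1 : ((p * ρ + q : ℕ) : ℝ)⁻¹ ≤ ((p : ℝ) * (ρ : ℝ) + 1)⁻¹ := by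
      rw [hn]
      exact inv_anti₀ (by linarith) (by linarith)
    have hsin : Real.sin (r * ((p * ρ + q : ℕ) : ℝ) ^ (-t)) ^ 2 ≤ ((p : ℕ) : ℝ) ^ (-(2 * t)) := by
      rw [hn]
      have hx0' : 0 ≤ r * ((p : ℝ) * (ρ : ℝ) + (q : ℝ)) ^ (-t) :=
        mul_nonneg hr (Real.rpow_nonneg hnpos.le _)
      have hxle : r * ((p : ℝ) * (ρ : ℝ) + (q : ℝ)) ^ (-t) ≤ (p : ℝ) ^ (-t) := by
        have h2 : ((p : ℝ) * (ρ : ℝ) + (q : ℝ)) ^ (-t) ≤ ((p : ℝ) * (ρ : ℝ)) ^ (-t) :=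
          Real.rpow_le_rpow_of_nonpos hpρpos (by linarith) (by linarith)
        have h3 : r * ((p : ℝ) * (ρ : ℝ) + (q : ℝ)) ^ (-t) ≤ (ρ : ℝ) ^ t * ((p : ℝ) * (ρ : ℝ)) ^ (-t) :=
          mul_le_mul hrρ h2 (Real.rpow_nonneg hnpos.le _) (Real.rpow_nonneg hρpos.le _)
        have h4 : (ρ : ℝ) ^ t * ((p : ℝ) * (ρ : ℝ)) ^ (-t) = (p : ℝ) ^ (-t) := by
          rw [Real.mul_rpow hpPos.le hρpos.le, mul_comm ((p:ℝ) ^ (-t)) _, ← mul_assoc,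
            ← Real.rpow_add hρpos, show t + -t = 0 by ring, Real.rpow_zero, one_mul]
        linarith
      calc Real.sin (r * ((p : ℝ) * (ρ : ℝ) + (q : ℝ)) ^ (-t)) ^ 2
          ≤ (r * ((p : ℝ) * (ρ : ℝ) + (q : ℝ)) ^ (-t)) ^ 2 := Real.sin_sq_le_sq
        _ ≤ ((p : ℝ) ^ (-t)) ^ 2 := by gcongr
        _ = ((p : ℕ) : ℝ) ^ (-(2 * t)) := by
            rw [pow_two, ← Real.rpow_add hpPos]; congr 1; ring
    exact mul_le_mul h1 hsin (sq_nonneg _) (inv_nonneg.2 (by positivity))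
  -- facts about the auxiliary series G
  have hG0 : ∀ p : ℕ+, 0 ≤ (((p : ℕ) : ℝ) * (ρ : ℝ) + 1)⁻¹ * ((p : ℕ) : ℝ) ^ (-(2 * t)) := by
    intro p; positivity
  have hρG : ∀ p : ℕ+,
      (ρ : ℝ) * ((((p : ℕ) : ℝ) * (ρ : ℝ) + 1)⁻¹ * ((p : ℕ) : ℝ) ^ (-(2 * t)))
        ≤ ((p : ℕ) : ℝ) ^ (-(1 + 2 * t)) := by
    intro p
    have hppos : (0 : ℝ) < ((p : ℕ) : ℝ) := by exact_mod_cast p.pos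
    have h1 : (ρ : ℝ) * (((p : ℕ) : ℝ) * (ρ : ℝ) + 1)⁻¹ ≤ (((p : ℕ) : ℝ))⁻¹ := by
      rw [← div_eq_mul_inv, ← one_div, div_le_div_iff₀ (by positivity) (by positivity)]
      nlinarith
    calc (ρ : ℝ) * ((((p : ℕ) : ℝ) * (ρ : ℝ) + 1)⁻¹ * ((p : ℕ) : ℝ) ^ (-(2 * t)))
        = ((ρ : ℝ) * (((p : ℕ) : ℝ) * (ρ : ℝ) + 1)⁻¹) * ((p : ℕ) : ℝ) ^ (-(2 * t)) := by ring
      _ ≤ (((p : ℕ) : ℝ))⁻¹ * ((p : ℕ) : ℝ) ^ (-(2 * t)) :=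
          mul_le_mul_of_nonneg_right h1 (Real.rpow_nonneg hppos.le _)
      _ = ((p : ℕ) : ℝ) ^ (-(1 + 2 * t)) := by
          rw [← Real.rpow_neg_one (((p : ℕ) : ℝ)), ← Real.rpow_add hppos]; congr 1; ring
  have hGle : ∀ p : ℕ+,
      (((p : ℕ) : ℝ) * (ρ : ℝ) + 1)⁻¹ * ((p : ℕ) : ℝ) ^ (-(2 * t))
        ≤ ((p : ℕ) : ℝ) ^ (-(1 + 2 * t)) :=
    fun p => le_trans (le_mul_of_one_le_left (hG0 p) hρR) (hρG p)
  have hGs : Summable (fun p : ℕ+ => (((p : ℕ) : ℝ) * (ρ : ℝ) + 1)⁻¹ * ((p : ℕ) : ℝ) ^ (-(2 * t))) :=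
    Summable.of_nonneg_of_le hG0 hGle hζ
  constructor
  · -- main inequality
    rw [aux_split18 (fun n : ℕ => (n : ℝ)⁻¹ * Real.sin (r * (n : ℝ) ^ (-t)) ^ 2) ρ
      (by omega) hfs_nat]
    apply add_le_add
    · -- head
      rw [← Finset.Ico_add_one_right_eq_Icc, Finset.sum_Ico_eq_sum_range]
      apply Finset.sum_le_sum
      intro i _
      calc ((i + 1 : ℕ) : ℝ)⁻¹ * Real.sin (r * ((i + 1 : ℕ) : ℝ) ^ (-t)) ^ 2
          ≤ ((i + 1 : ℕ) : ℝ)⁻¹ := hfle (i + 1)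
        _ = ((1 + i : ℕ) : ℝ)⁻¹ := by rw [Nat.add_comm]
    · -- tail
      have hrhs : (ρ : ℝ) * ∑' p : ℕ+, (((p : ℕ) : ℝ) * (ρ : ℝ) + 1)⁻¹ * ((p : ℕ) : ℝ) ^ (-(2 * t))
          = ∑' p : ℕ, (ρ : ℝ) * ((((p + 1 : ℕ)) : ℝ) * (ρ : ℝ) + 1)⁻¹ * (((p + 1 : ℕ)) : ℝ) ^ (-(2 * t)) := by
        rw [← Equiv.tsum_eq Equiv.pnatEquivNat.symm
          (fun p : ℕ+ => (((p : ℕ) : ℝ) * (ρ : ℝ) + 1)⁻¹ * ((p : ℕ) : ℝ) ^ (-(2 * t))),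
          ← tsum_mul_left]
        have hcoe : ∀ p : ℕ, ((Equiv.pnatEquivNat.symm p : ℕ+) : ℕ) = p + 1 := fun p => rfl
        exact tsum_congr fun p => by simp only [hcoe]; rw [← mul_assoc]
      rw [hrhs]
      have hgsum : Summable fun p : ℕ =>
          ∑ i ∈ Finset.range ρ, (((p + 1) * ρ + i + 1 : ℕ) : ℝ)⁻¹ *
            Real.sin (r * (((p + 1) * ρ + i + 1 : ℕ) : ℝ) ^ (-t)) ^ 2 := by
        apply summable_sum
        intro i _
        apply hfs_nat.comp_injective
        intro a b hab
        simp only at hab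
        have h1 := Nat.add_right_cancel (Nat.add_right_cancel hab)
        have h2 := Nat.eq_of_mul_eq_mul_right (show 0 < ρ by omega) h1
        omega
      have hrs : Summable fun p : ℕ =>
          (ρ : ℝ) * ((((p + 1 : ℕ)) : ℝ) * (ρ : ℝ) + 1)⁻¹ * (((p + 1 : ℕ)) : ℝ) ^ (-(2 * t)) := by
        have h := (Equiv.pnatEquivNat.symm.summable_iff
          (f := fun p : ℕ+ => (ρ : ℝ) * ((((p : ℕ) : ℝ) * (ρ : ℝ) + 1)⁻¹ * ((p : ℕ) : ℝ) ^ (-(2 * t))))).2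
          (hGs.mul_left (ρ : ℝ))
        exact h.congr fun p => by simp [Function.comp, mul_assoc]
      apply Summable.tsum_le_tsum _ hgsum hrs
      intro p
      calc ∑ i ∈ Finset.range ρ, (((p + 1) * ρ + i + 1 : ℕ) : ℝ)⁻¹ *
            Real.sin (r * (((p + 1) * ρ + i + 1 : ℕ) : ℝ) ^ (-t)) ^ 2
          ≤ ∑ _i ∈ Finset.range ρ,
              ((((p + 1 : ℕ)) : ℝ) * (ρ : ℝ) + 1)⁻¹ * (((p + 1 : ℕ)) : ℝ) ^ (-(2 * t)) := by
            apply Finset.sum_le_sum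
            intro i hi
            have hiρ := Finset.mem_range.mp hi
            have harg : (p + 1) * ρ + i + 1 = (p + 1) * ρ + (i + 1) := by omega
            rw [harg]
            exact key (p + 1) (i + 1) (by omega) (by omega) (by omega)
        _ = (ρ : ℝ) * (((((p + 1 : ℕ)) : ℝ) * (ρ : ℝ) + 1)⁻¹ * (((p + 1 : ℕ)) : ℝ) ^ (-(2 * t))) := by
            rw [Finset.sum_const, Finset.card_range, nsmul_eq_mul]
        _ = (ρ : ℝ) * ((((p + 1 : ℕ)) : ℝ) * (ρ : ℝ) + 1)⁻¹ * (((p + 1 : ℕ)) : ℝ) ^ (-(2 * t)) := by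
            ring
  · -- second inequality
    rw [← tsum_mul_left]
    exact Summable.tsum_le_tsum hρG (hGs.mul_left _) hζ
end
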